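/- Let Φₜ be the one-parameter family of Möbius transformations of the closed unit ball in ℝ³ given in spherical-type coordinates by Φₜ(r·p) = (t·(2rt·p¹ + r² + 1)·e₁ + (1 - t²)·r·p)/(r²t² + 2rt·p¹ + 1) for r ∈ [0,1], t ∈ (-1,1), p ∈ S². Then the derivative at t = 0 of the i-th coordinate of the normalized point Φₜ(rp)/|Φₜ(rp)| equals ((1 + r²)/r)·(δ¹ⁱ - p¹·pⁱ) for every p ∈ S² and r ∈ (0,1). -/

import Mathlib

/-! The factor `(r²t² + 2rt·p¹ + 1)⁻¹` is positive near `t = 0` and disappears on normalizing,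
so one only has to differentiate `w/|w|` for the numerator `w(t) = t(2rt·p¹ + r² + 1)e₁ + (1-t²)r·p`.
At `t = 0` this curve passes through `w(0) = r·p` with velocity `(1 + r²)e₁`, and the derivative
of `w/|w|` there is the component of `w'(0)/|w(0)|` orthogonal to `p`. -/

/-- The Möbius transformation `Φₜ` of the closed unit ball of `ℝ³`, given in
spherical-type coordinates by
`Φₜ(r·p) = (t(2rt·p¹ + r² + 1)e₁ + (1-t²)r·p)/(r²t² + 2rt·p¹ + 1)`. -/
noncomputable def mobiusBall (r : ℝ) (p : EuclideanSpace ℝ (Fin 3)) (t : ℝ) :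
    EuclideanSpace ℝ (Fin 3) :=
  (r ^ 2 * t ^ 2 + 2 * r * t * p 0 + 1)⁻¹ •
    ((t * (2 * r * t * p 0 + r ^ 2 + 1)) • EuclideanSpace.single (0 : Fin 3) (1 : ℝ)
      + ((1 - t ^ 2) * r) • p)

open InnerProductSpace RealInnerProductSpace

section Normalize

variable {E : Type*} [NormedAddCommGroup E] [InnerProductSpace ℝ E]

theorem HasDerivAt.norm {f : ℝ → E} {f' : E} {x : ℝ} (hf : HasDerivAt f f' x) (h0 : f x ≠ 0) :
    HasDerivAt (‖f ·‖) (⟪f x, f'⟫ / ‖f x‖) x := by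
  have hsq : ‖f x‖ ^ 2 ≠ 0 := by positivity
  convert hf.norm_sq.sqrt hsq using 1
  · ext y
    rw [Real.sqrt_sq (norm_nonneg _)]
  · rw [Real.sqrt_sq (norm_nonneg _)]
    ring

theorem HasDerivAt.clm_apply_div_norm (ℓ : E →L[ℝ] ℝ) {f : ℝ → E} {f' : E} {x : ℝ}
    (hf : HasDerivAt f f' x) (h0 : f x ≠ 0) :
    HasDerivAt (fun y => ℓ (f y) / ‖f y‖)
      ((ℓ f' * ‖f x‖ - ℓ (f x) * (⟪f x, f'⟫ / ‖f x‖)) / ‖f x‖ ^ 2) x :=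
  (ℓ.hasFDerivAt.comp_hasDerivAt x hf).div (hf.norm h0) (norm_ne_zero_iff.mpr h0)

theorem ContinuousLinearMap.map_smul_div_norm_smul (ℓ : E →L[ℝ] ℝ) {c : ℝ} (hc : 0 < c)
    (v : E) : ℓ (c • v) / ‖c • v‖ = ℓ v / ‖v‖ := by
  rw [map_smul, norm_smul, Real.norm_of_nonneg hc.le, smul_eq_mul,
    mul_div_mul_left _ _ hc.ne']

end Normalize

section Mobius

variable (r : ℝ) (p : EuclideanSpace ℝ (Fin 3))

noncomputable def mobiusBallNumerator (t : ℝ) : EuclideanSpace ℝ (Fin 3) :=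
  (t * (2 * r * t * p 0 + r ^ 2 + 1)) • EuclideanSpace.single (0 : Fin 3) (1 : ℝ)
    + ((1 - t ^ 2) * r) • p

theorem mobiusBall_eq_smul (t : ℝ) :
    mobiusBall r p t = (r ^ 2 * t ^ 2 + 2 * r * t * p 0 + 1)⁻¹ • mobiusBallNumerator r p t :=
  rfl

theorem mobiusBallNumerator_zero : mobiusBallNumerator r p 0 = r • p := by
  simp [mobiusBallNumerator]

theorem hasDerivAt_mobiusBallNumerator_zero :
    HasDerivAt (mobiusBallNumerator r p)
      ((1 + r ^ 2) • EuclideanSpace.single (0 : Fin 3) (1 : ℝ)) 0 := by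
  have ha : HasDerivAt (fun t : ℝ => t * (2 * r * t * p 0 + r ^ 2 + 1)) (1 + r ^ 2) 0 := by
    have hlin : HasDerivAt (fun t : ℝ => 2 * r * t * p 0 + r ^ 2 + 1) (2 * r * 1 * p 0) 0 :=
      ((((hasDerivAt_id' 0).const_mul (2 * r)).mul_const (p 0)).add_const (r ^ 2)).add_const 1
    exact ((hasDerivAt_id' 0).mul hlin).congr_deriv (by ring)
  have hb : HasDerivAt (fun t : ℝ => (1 - t ^ 2) * r) 0 0 := by
    simpa using ((hasDerivAt_pow 2 (0 : ℝ)).const_sub 1).mul_const r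
  exact ((ha.smul_const _).add (hb.smul_const p)).congr_deriv (by simp)

theorem eventually_pos_mobiusBall_denom :
    ∀ᶠ t in nhds (0 : ℝ), 0 < r ^ 2 * t ^ 2 + 2 * r * t * p 0 + 1 := by
  have hcont : Continuous fun t : ℝ => r ^ 2 * t ^ 2 + 2 * r * t * p 0 + 1 := by fun_prop
  exact continuousAt_const.eventually_lt hcont.continuousAt (by simp)

end Mobius

theorem stmt_7_general (r : ℝ) (hr0 : 0 < r)
    (p : EuclideanSpace ℝ (Fin 3)) (hp : ‖p‖ = 1) (i : Fin 3) :
    HasDerivAt (fun t : ℝ => mobiusBall r p t i / ‖mobiusBall r p t‖)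
      (((1 + r ^ 2) / r) * ((if i = 0 then (1:ℝ) else 0) - p 0 * p i)) 0 := by
  let ℓ := EuclideanSpace.proj (𝕜 := ℝ) i
  have hw0 : mobiusBallNumerator r p 0 ≠ 0 := by
    rw [mobiusBallNumerator_zero]
    exact smul_ne_zero hr0.ne' (norm_ne_zero_iff.mp (by simp [hp]))
  have hderiv := (hasDerivAt_mobiusBallNumerator_zero r p).clm_apply_div_norm ℓ hw0
  have hnorm : ‖mobiusBallNumerator r p 0‖ = r := by
    rw [mobiusBallNumerator_zero, norm_smul, hp, Real.norm_of_nonneg hr0.le, mul_one]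
  refine (hderiv.congr_deriv ?_).congr_of_eventuallyEq ?_
  · rw [hnorm, mobiusBallNumerator_zero]
    simp only [ℓ, map_smul, PiLp.proj_apply, PiLp.smul_apply, PiLp.single_apply, smul_eq_mul,
      real_inner_smul_right, EuclideanSpace.inner_single_right,
      Real.ringHom_apply, one_mul, eq_comm]
    field_simp
  · filter_upwards [eventually_pos_mobiusBall_denom r p] with t ht
    rw [mobiusBall_eq_smul]
    exact ℓ.map_smul_div_norm_smul (inv_pos.mpr ht) _

/-- the derivative at `t = 0` of the `i`-th coordinate of the normalized
point `Φₜ(rp)/|Φₜ(rp)|` equals `((1 + r²)/r)(δ¹ⁱ - p¹ pⁱ)` for every `p ∈ S²` and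
`r ∈ (0,1)`. -/
theorem stmt_7 (r : ℝ) (hr0 : 0 < r) (hr1 : r < 1)
    (p : EuclideanSpace ℝ (Fin 3)) (hp : ‖p‖ = 1) (i : Fin 3) :
    HasDerivAt (fun t : ℝ => mobiusBall r p t i / ‖mobiusBall r p t‖)
      (((1 + r ^ 2) / r) * ((if i = 0 then (1:ℝ) else 0) - p 0 * p i)) 0 :=
  stmt_7_general r hr0 p hp i
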